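/- arXiv:2108.06059 — 2 statements merged into one kernel-verified Lean document; each statement's English description precedes it below -/
import Mathlib

section
/- Let 𝒬 be the rational comb with its path metric, basepoint b = (0,0), and inclusion ι : 𝒬 → ℝ². Let r = (r₁, r₂) ∈ ℝ² with r₁ irrational, and let q_n ∈ 𝒬 be a sequence with ι(q_n) → r in the Euclidean metric of ℝ². Then for every x ∈ 𝒬, the horofunctions satisfy ψ_{q_n}(x) → ψ_{(r₁,0)}(x) as n → ∞, where (r₁,0) is the point of the horizontal spine of 𝒬 over r₁. In particular, the pointwise limit of these horofunctions is the horofunction of an interior point of 𝒬, independent of r₂. -/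
open Filter Topology

/-- The rational comb `𝒬 = (ℝ × {0}) ∪ (ℚ × ℝ) ⊆ ℝ²`: a point is on the
horizontal spine (second coordinate zero) or on a vertical tooth over a
rational number. -/
@[ext]
structure Comb where
  pt : ℝ × ℝ
  mem : pt.2 = 0 ∨ ∃ q : ℚ, (q : ℝ) = pt.1

/-- The inclusion `ι : 𝒬 → ℝ²`. -/
def Comb.ι (x : Comb) : ℝ × ℝ := x.pt

/-- The path metric of the comb:
`d((a,s),(c,t)) = |s − t|` if `a = c`, and `|s| + |a − c| + |t|` otherwise. -/
noncomputable def combDist (x y : Comb) : ℝ :=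
  if x.pt.1 = y.pt.1 then |x.pt.2 - y.pt.2|
  else |x.pt.2| + |x.pt.1 - y.pt.1| + |y.pt.2|

noncomputable instance : MetricSpace Comb where
  dist := combDist
  dist_self x := by
    show combDist x x = 0
    simp [combDist]
  dist_comm x y := by
    show combDist x y = combDist y x
    unfold combDist
    rcases eq_or_ne x.pt.1 y.pt.1 with h | h
    · rw [if_pos h, if_pos h.symm, abs_sub_comm]
    · rw [if_neg h, if_neg (Ne.symm h), abs_sub_comm]
      ring
  dist_triangle x y z := by
    show combDist x z ≤ combDist x y + combDist y z
    unfold combDist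
    obtain ⟨⟨a, s⟩, _⟩ := x
    obtain ⟨⟨c, t⟩, _⟩ := y
    obtain ⟨⟨e, u⟩, _⟩ := z
    simp only
    have hsu : |s - u| ≤ |s| + |u| := by
      simpa [sub_eq_add_neg] using abs_add_le s (-u)
    have hst : |s - t| ≤ |s| + |t| := by
      simpa [sub_eq_add_neg] using abs_add_le s (-t)
    have htu : |t - u| ≤ |t| + |u| := by
      simpa [sub_eq_add_neg] using abs_add_le t (-u)
    have hs' : |s| - |t| ≤ |s - t| := abs_sub_abs_le_abs_sub s t
    have hu' : |u| - |t| ≤ |t - u| := by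
      rw [abs_sub_comm]; exact abs_sub_abs_le_abs_sub u t
    by_cases h2 : a = c
    · subst h2
      by_cases h1 : a = e
      · subst h1
        simp only [if_pos rfl]
        exact abs_sub_le s t u
      · rw [if_neg h1, if_pos rfl, if_neg h1]
        linarith
    · by_cases h3 : c = e
      · subst h3
        rw [if_neg h2, if_neg h2, if_pos rfl]
        linarith
      · by_cases h1 : a = e
        · subst h1
          rw [if_pos rfl, if_neg h2, if_neg h3]
          have := abs_nonneg (a - c)
          have := abs_nonneg (c - a)
          have := abs_nonneg t
          linarith [abs_sub_le s t u, htu]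
        · rw [if_neg h1, if_neg h2, if_neg h3]
          have := abs_sub_le a c e
          have := abs_nonneg t
          linarith
  eq_of_dist_eq_zero := by
    intro x y h
    have h : combDist x y = 0 := h
    unfold combDist at h
    rcases eq_or_ne x.pt.1 y.pt.1 with h1 | h1
    · rw [if_pos h1] at h
      have h2 : x.pt.2 = y.pt.2 := by
        have := abs_eq_zero.mp h
        linarith
      ext
      · exact h1
      · exact h2
    · rw [if_neg h1] at h
      exfalso
      have hpos : 0 < |x.pt.1 - y.pt.1| := abs_pos.mpr (sub_ne_zero.mpr h1)
      have := abs_nonneg x.pt.2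
      have := abs_nonneg y.pt.2
      linarith

/-- The basepoint `b = (0,0)` of the comb. -/
def combBase : Comb := ⟨(0, 0), Or.inl rfl⟩

/-- The horofunction at `z` with basepoint `b`: `ψ_z(x) = d(x,z) - d(b,z)`. -/
noncomputable def horo {X : Type*} [MetricSpace X] (b z : X) : X → ℝ :=
  fun x => dist x z - dist b z

/-! Since the basepoint lies on the spine, `d(b, y) = |y₁| + |y₂|`, and as long as `x` and `y`
are not on a common tooth, `d(x, y) = |x₂| + |x₁ - y₁| + |y₂|`. The height `|y₂|` cancels in
`ψ_y(x) = |x₂| + |x₁ - y₁| - |y₁|`, which depends continuously on `y₁` alone. There is no tooth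
over an irrational `r₁`, so `q_n` eventually leaves the tooth of `x` (or `x` lies on the spine
over `r₁`), and the formula passes to the limit. -/

namespace Comb

theorem dist_eq_of_fst_ne {x y : Comb} (h : x.pt.1 ≠ y.pt.1) :
    dist x y = |x.pt.2| + |x.pt.1 - y.pt.1| + |y.pt.2| :=
  if_neg h

theorem dist_eq_of_snd_eq_zero_right {x y : Comb} (hy : y.pt.2 = 0) :
    dist x y = |x.pt.2| + |x.pt.1 - y.pt.1| := by
  by_cases h : x.pt.1 = y.pt.1
  · show combDist x y = _
    simp [combDist, h, hy]
  · simp [dist_eq_of_fst_ne h, hy]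

theorem dist_eq_of_fst_ne_or_snd_eq_zero {x y : Comb}
    (h : x.pt.1 ≠ y.pt.1 ∨ x.pt.2 = 0 ∨ y.pt.2 = 0) :
    dist x y = |x.pt.2| + |x.pt.1 - y.pt.1| + |y.pt.2| := by
  rcases h with h | hx | hy
  · exact dist_eq_of_fst_ne h
  · rw [dist_comm, dist_eq_of_snd_eq_zero_right hx, hx, abs_sub_comm]
    ring
  · rw [dist_eq_of_snd_eq_zero_right hy, hy, abs_zero, add_zero]

theorem dist_combBase (y : Comb) : dist combBase y = |y.pt.1| + |y.pt.2| := by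
  rw [dist_comm, dist_eq_of_snd_eq_zero_right rfl]
  simp [combBase, add_comm]

theorem snd_eq_zero_of_irrational (x : Comb) (h : Irrational x.pt.1) : x.pt.2 = 0 :=
  x.mem.resolve_right fun ⟨q, hq⟩ => h ⟨q, hq⟩

end Comb

theorem horo_combBase_eq {x y : Comb} (h : x.pt.1 ≠ y.pt.1 ∨ x.pt.2 = 0 ∨ y.pt.2 = 0) :
    horo combBase y x = |x.pt.2| + |x.pt.1 - y.pt.1| - |y.pt.1| := by
  rw [horo, Comb.dist_eq_of_fst_ne_or_snd_eq_zero h, Comb.dist_combBase]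
  ring

/-- Let `r = (r₁, r₂) ∈ ℝ²` with `r₁` irrational, and let `q_n ∈ 𝒬` be a
sequence with `ι(q_n) → r` in `ℝ²`.  Then for every `x ∈ 𝒬` the horofunctions
satisfy `ψ_{q_n}(x) → ψ_{(r₁,0)}(x)`, where `(r₁,0)` is the point of the
horizontal spine of `𝒬` over `r₁`: the pointwise limit is the horofunction of
an interior point of `𝒬`, independent of `r₂`. -/
theorem stmt9 (r₁ r₂ : ℝ) (hr : Irrational r₁) (qn : ℕ → Comb)
    (hq : Tendsto (fun n => (qn n).ι) atTop (𝓝 (r₁, r₂))) :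
    ∀ x : Comb,
      Tendsto (fun n => horo combBase (qn n) x) atTop
        (𝓝 (horo combBase ⟨(r₁, 0), Or.inl rfl⟩ x)) := by
  intro x
  have hfst : Tendsto (fun n => (qn n).pt.1) atTop (𝓝 r₁) :=
    (continuous_fst.tendsto _).comp hq
  have hoff_tooth : ∀ᶠ n in atTop, x.pt.1 ≠ (qn n).pt.1 ∨ x.pt.2 = 0 ∨ (qn n).pt.2 = 0 := by
    by_cases hx : x.pt.1 = r₁
    · exact .of_forall fun _ => Or.inr (Or.inl (x.snd_eq_zero_of_irrational (hx ▸ hr)))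
    · exact (hfst.eventually_ne (Ne.symm hx)).mono fun _ hn => Or.inl (Ne.symm hn)
  rw [horo_combBase_eq (Or.inr (Or.inr rfl))]
  refine Tendsto.congr' (hoff_tooth.mono fun _ hn => (horo_combBase_eq hn).symm) ?_
  exact (tendsto_const_nhds.add (tendsto_const_nhds.sub hfst).abs).sub hfst.abs
end

section
/- Let 𝒬 be the rational comb with its path metric and basepoint b = (0,0). Let t_n = (a_n, s_n) ∈ 𝒬 be a sequence with a_n → +∞. Then for every q = (c,t) ∈ 𝒬, the horofunctions satisfy ψ_{t_n}(q) → |t| − c as n → ∞; equivalently, the limit function ψ_θ satisfies ψ_θ(q) = d((c,0), q) − d((c,0), b) when c > 0 and ψ_θ(q) = d(q,b) when c ≤ 0, where (c,0) is the point of the horizontal spine below q. In particular the limit does not depend on the heights s_n. -/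
open Filter Topology

namespace Comb

theorem dist_eq_of_fst_eq {x y : Comb} (h : x.pt.1 = y.pt.1) :
    dist x y = |x.pt.2 - y.pt.2| :=
  if_pos h

theorem dist_combBase_s10 (x : Comb) : dist x combBase = |x.pt.1| + |x.pt.2| := by
  by_cases h : x.pt.1 = 0
  · rw [dist_eq_of_fst_eq h, h]
    simp [combBase]
  · rw [dist_eq_of_fst_ne h]
    simp only [combBase, sub_zero, abs_zero, add_zero]
    ring

theorem horo_combBase_of_fst_ne {z q : Comb} (hq : q.pt.1 ≠ z.pt.1) :
    horo combBase z q = |q.pt.2| + |q.pt.1 - z.pt.1| - |z.pt.1| := by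
  rw [horo, dist_comm combBase, dist_combBase_s10, dist_eq_of_fst_ne hq]
  ring

/-- Once the tooth of `z` lies to the right of both `q` and the basepoint, geodesics from `q`
and from `b` to `z` share the segment from `(max c 0, 0)` onwards, so `ψ_z(q)` stops changing. -/
theorem tendsto_horo_combBase {ι : Type*} {l : Filter ι} {z : ι → Comb}
    (hz : Tendsto (fun i => (z i).pt.1) l atTop) (q : Comb) :
    Tendsto (fun i => horo combBase (z i) q) l (𝓝 (|q.pt.2| - q.pt.1)) := by
  refine tendsto_const_nhds.congr' ?_
  filter_upwards [hz.eventually_gt_atTop (max q.pt.1 0)] with i hi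
  obtain ⟨hq, h0⟩ := max_lt_iff.mp hi
  rw [horo_combBase_of_fst_ne hq.ne, abs_of_neg (sub_neg.mpr hq), abs_of_pos h0]
  ring

end Comb

/-- Let `t_n = (a_n, s_n) ∈ 𝒬` with `a_n → +∞`.  Then for every
`q = (c,t) ∈ 𝒬` the horofunctions satisfy `ψ_{t_n}(q) → |t| − c`;
equivalently, the limit function `ψ_θ` satisfies
`ψ_θ(q) = d((c,0), q) − d((c,0), b)` when `c > 0` and `ψ_θ(q) = d(q,b)` when
`c ≤ 0`, where `(c,0)` is the point of the horizontal spine below `q`.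
In particular the limit does not depend on the heights `s_n`. -/
theorem stmt10 (tn : ℕ → Comb)
    (ha : Tendsto (fun n => (tn n).pt.1) atTop atTop) :
    ∀ q : Comb,
      Tendsto (fun n => horo combBase (tn n) q) atTop (𝓝 (|q.pt.2| - q.pt.1)) ∧
      (0 < q.pt.1 →
        |q.pt.2| - q.pt.1 =
          dist (⟨(q.pt.1, 0), Or.inl rfl⟩ : Comb) q -
            dist (⟨(q.pt.1, 0), Or.inl rfl⟩ : Comb) combBase) ∧
      (q.pt.1 ≤ 0 → |q.pt.2| - q.pt.1 = dist q combBase) := by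
  intro q
  refine ⟨Comb.tendsto_horo_combBase ha q, fun hc => ?_, fun hc => ?_⟩
  · rw [Comb.dist_combBase_s10, Comb.dist_eq_of_fst_eq (x := ⟨(q.pt.1, 0), Or.inl rfl⟩) (y := q) rfl]
    simp [abs_of_pos hc]
  · rw [Comb.dist_combBase_s10, abs_of_nonpos hc]
    ring
end
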